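/- For every finite simple graph G on n vertices, 2Z(G) ≤ n + Z_−(G). -/

import Mathlib

/-!
Take a minimum CCR-Z_− zero forcing set `B` with chronology `a i → b i`, `i < k = n - |B|`.
Under CCR-Z_− no vertex forces twice, so the relation `a i = b j` (the forcing vertex of step `i`
is itself forced at a later step `j`) is a partial matching on the steps. Colouring its chains
by parity, one colour class `I` has at least `k / 2` steps and contains no pair `i < j` with
`a i = b j`. Starting from `V ∖ b(I)` and performing only the forces of `I`, every forcing
vertex is already blue when it forces, so these are CCR-Z forces and
`Z(G) ≤ n - |I| ≤ n - k / 2 = (n + Z_−(G)) / 2`.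
-/

namespace ZFGrundy

variable {V : Type*}

/-- `u` is a member of the closed neighborhood `N[x]` of `x` in `G`. -/
def ClosedNbr (G : SimpleGraph V) (x u : V) : Prop := u = x ∨ G.Adj x u

/-- CCR-Z: the force `x → y` is valid w.r.t. blue set `S` if `y ∉ S`, `y ∈ N(x)`,
and `N[x] \ {y} ⊆ S`. -/
def ZForce (G : SimpleGraph V) (S : Set V) (x y : V) : Prop :=
  y ∉ S ∧ G.Adj x y ∧ ∀ u, ClosedNbr G x u → u ≠ y → u ∈ S

/-- CCR-Z_ℓ̇: the force `x → y` is valid w.r.t. blue set `S` if `y ∉ S`, `y ∈ N[x]`,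
and `N[x] \ {y} ⊆ S`. -/
def ZelldForce (G : SimpleGraph V) (S : Set V) (x y : V) : Prop :=
  y ∉ S ∧ ClosedNbr G x y ∧ ∀ u, ClosedNbr G x u → u ≠ y → u ∈ S

/-- CCR-Z_−: the force `x → y` is valid w.r.t. blue set `S` if `y ∉ S`, `y ∈ N(x)`,
and `N(x) \ {y} ⊆ S`. -/
def ZminusForce (G : SimpleGraph V) (S : Set V) (x y : V) : Prop :=
  y ∉ S ∧ G.Adj x y ∧ ∀ u, G.Adj x u → u ≠ y → u ∈ S

/-- CCR-Z_L: either `x ≠ y` and the force is valid under CCR-Z_−, or `x = y` and the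
force is valid under CCR-Z_ℓ̇. -/
def ZLForce (G : SimpleGraph V) (S : Set V) (x y : V) : Prop :=
  (x ≠ y ∧ ZminusForce G S x y) ∨ (x = y ∧ ZelldForce G S x y)

/-- `B` is a zero forcing set of `G` with respect to the color change rule `force`:
there is an ordering `b 0, …, b (k-1)` of the vertices outside `B` and vertices
`a 0, …, a (k-1)` such that each force `a i → b i` is valid w.r.t. the blue set
consisting of all vertices other than `b i, b (i+1), …, b (k-1)`. -/
def IsZFS (G : SimpleGraph V) (force : SimpleGraph V → Set V → V → V → Prop)
    (B : Finset V) : Prop :=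
  ∃ (k : ℕ) (b a : Fin k → V), Function.Injective b ∧
    (∀ v : V, v ∉ B ↔ ∃ i, b i = v) ∧
    ∀ i : Fin k, force G {v | ∀ j : Fin k, i ≤ j → v ≠ b j} (a i) (b i)

/-- The zero forcing number with respect to the color change rule `force`. -/
noncomputable def zfNum (G : SimpleGraph V)
    (force : SimpleGraph V → Set V → V → V → Prop) : ℕ :=
  sInf {m : ℕ | ∃ B : Finset V, IsZFS G force B ∧ B.card = m}

/-- A Z-sequence: distinct vertices with `N(v i) \ ⋃_{j<i} N[v j] ≠ ∅`. -/
def IsZSeq (G : SimpleGraph V) {k : ℕ} (v : Fin k → V) : Prop :=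
  Function.Injective v ∧
  ∀ i, ∃ u, G.Adj (v i) u ∧ ∀ j, j < i → ¬ ClosedNbr G (v j) u

/-- A dominating sequence: distinct vertices with `N[v i] \ ⋃_{j<i} N[v j] ≠ ∅`. -/
def IsDomSeq (G : SimpleGraph V) {k : ℕ} (v : Fin k → V) : Prop :=
  Function.Injective v ∧
  ∀ i, ∃ u, ClosedNbr G (v i) u ∧ ∀ j, j < i → ¬ ClosedNbr G (v j) u

/-- A total dominating sequence: distinct vertices with `N(v i) \ ⋃_{j<i} N(v j) ≠ ∅`. -/
def IsTotDomSeq (G : SimpleGraph V) {k : ℕ} (v : Fin k → V) : Prop :=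
  Function.Injective v ∧
  ∀ i, ∃ u, G.Adj (v i) u ∧ ∀ j, j < i → ¬ G.Adj (v j) u

/-- An L-sequence: distinct vertices with `N[v i] \ ⋃_{j<i} N(v j) ≠ ∅`. -/
def IsLSeq (G : SimpleGraph V) {k : ℕ} (v : Fin k → V) : Prop :=
  Function.Injective v ∧
  ∀ i, ∃ u, ClosedNbr G (v i) u ∧ ∀ j, j < i → ¬ G.Adj (v j) u

/-- The Z-Grundy domination number: the largest length of a Z-sequence. -/
noncomputable def grundyZ (G : SimpleGraph V) : ℕ :=
  sSup {k : ℕ | ∃ v : Fin k → V, IsZSeq G v}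

/-- The Grundy domination number: the largest length of a dominating sequence. -/
noncomputable def grundyDom (G : SimpleGraph V) : ℕ :=
  sSup {k : ℕ | ∃ v : Fin k → V, IsDomSeq G v}

/-- The Grundy total domination number: the largest length of a total dominating
sequence. -/
noncomputable def grundyTot (G : SimpleGraph V) : ℕ :=
  sSup {k : ℕ | ∃ v : Fin k → V, IsTotDomSeq G v}

/-- The L-Grundy domination number: the largest length of an L-sequence. -/
noncomputable def grundyL (G : SimpleGraph V) : ℕ :=
  sSup {k : ℕ | ∃ v : Fin k → V, IsLSeq G v}

/-- The largest length of a total dominating sequence using only vertices of `X`. -/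
noncomputable def grundyTotOn (G : SimpleGraph V) (X : Set V) : ℕ :=
  sSup {k : ℕ | ∃ v : Fin k → V, IsTotDomSeq G v ∧ ∀ i, v i ∈ X}

/-- The domination number: minimum size of a set `X` such that every vertex outside
`X` has a neighbor in `X`. -/
noncomputable def domNum (G : SimpleGraph V) : ℕ :=
  sInf {m : ℕ | ∃ X : Finset V, (∀ v, v ∉ X → ∃ u ∈ X, G.Adj v u) ∧ X.card = m}

/-- The vertex cover number: minimum size of a set of vertices meeting every edge. -/
noncomputable def vcNum (G : SimpleGraph V) : ℕ :=
  sInf {m : ℕ | ∃ C : Finset V, (∀ u w, G.Adj u w → u ∈ C ∨ w ∈ C) ∧ C.card = m}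

/-- The family `S(G)` of real symmetric matrices whose off-diagonal entry `A i j`
is nonzero exactly when `i` and `j` are adjacent in `G`. -/
def SFam (G : SimpleGraph V) : Set (Matrix V V ℝ) :=
  {A | A.IsSymm ∧ ∀ i j : V, i ≠ j → (A i j ≠ 0 ↔ G.Adj i j)}

/-- The family `S_ℓ̇(G)`: matrices in `S(G)` with all diagonal entries nonzero. -/
def SldFam (G : SimpleGraph V) : Set (Matrix V V ℝ) :=
  {A | A ∈ SFam G ∧ ∀ i : V, A i i ≠ 0}

/-- The family `S_0(G)`: matrices in `S(G)` with all diagonal entries zero. -/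
def S0Fam (G : SimpleGraph V) : Set (Matrix V V ℝ) :=
  {A | A ∈ SFam G ∧ ∀ i : V, A i i = 0}

/-- The bipartite graph `B_L(G)` on `{x_i} ∪ {y_i} ∪ {z_i}` (encoded as
`Sum.inl i`, `Sum.inr (Sum.inl i)`, `Sum.inr (Sum.inr i)`), with edges `{x i, y j}`
and `{x i, z j}` for every edge `{i, j}` of `G`, together with edges `{x i, y i}`
for every vertex `i`. -/
def BL (G : SimpleGraph V) : SimpleGraph (V ⊕ V ⊕ V) :=
  SimpleGraph.fromRel fun p q =>
    match p, q with
    | Sum.inl i, Sum.inr (Sum.inl j) => G.Adj i j ∨ i = j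
    | Sum.inl i, Sum.inr (Sum.inr j) => G.Adj i j
    | _, _ => False

open Finset

section ChainParity

variable {k : ℕ}

open Classical in
/-- Parity of the number of steps of the `R`-chain `i < j₁ < j₂ < ⋯` issuing from `i`
(`true` for an even number); when `R` is not functional the successor is chosen. -/
noncomputable def chainParity (R : Fin k → Fin k → Prop) (i : Fin k) : Bool :=
  if h : ∃ j, i < j ∧ R i j then !chainParity R h.choose else true
termination_by k - i.val
decreasing_by
  have := h.choose_spec.1
  have := h.choose.isLt
  omega

lemma chainParity_of_rel {R : Fin k → Fin k → Prop}
    (hfun : ∀ i j j', R i j → R i j' → j = j') {i j : Fin k} (hij : i < j) (hR : R i j) :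
    chainParity R i = !chainParity R j := by
  have h : ∃ j, i < j ∧ R i j := ⟨j, hij, hR⟩
  rw [chainParity, dif_pos h, hfun i _ _ h.choose_spec.2 hR]

lemma exists_rel_of_chainParity_eq_false {R : Fin k → Fin k → Prop} {i : Fin k}
    (h : chainParity R i = false) : ∃ j, i < j ∧ R i j ∧ chainParity R j = true := by
  rw [chainParity] at h
  split_ifs at h with hex
  exact ⟨hex.choose, hex.choose_spec.1, hex.choose_spec.2, by simpa using h⟩

theorem exists_le_two_mul_card_forall_not_rel (R : Fin k → Fin k → Prop)
    (hfun : ∀ i j j', R i j → R i j' → j = j')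
    (hinj : ∀ i i' j, R i j → R i' j → i = i') :
    ∃ I : Finset (Fin k), k ≤ 2 * #I ∧ ∀ i ∈ I, ∀ j ∈ I, i < j → ¬ R i j := by
  classical
  set I : Finset (Fin k) := {i | chainParity R i = true}
  refine ⟨I, ?_, ?_⟩
  · have hsplit : #I + #{i | ¬ chainParity R i = true} = k := by
      rw [card_filter_add_card_filter_not, card_univ, Fintype.card_fin]
    -- an index of odd parity is sent to its `R`-successor, which has even parity
    have hle : #{i | ¬ chainParity R i = true} ≤ #I := by
      refine card_le_card_of_forall_subsingleton R (fun i hi => ?_)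
        (fun j _ i₁ hi₁ i₂ hi₂ => hinj i₁ i₂ j hi₁.2 hi₂.2)
      obtain ⟨j, -, hR, hj⟩ :=
        exists_rel_of_chainParity_eq_false (by simpa using (mem_filter.1 hi).2)
      exact ⟨j, by simpa [I] using hj, hR⟩
    omega
  · intro i hi j hj hij hR
    simp only [I, mem_filter, mem_univ, true_and] at hi hj
    simp [chainParity_of_rel hfun hij hR, hj] at hi

end ChainParity

section ZeroForcing

variable {G : SimpleGraph V} {force : SimpleGraph V → Set V → V → V → Prop}

lemma isZFS_univ [Fintype V] : IsZFS G force univ :=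
  ⟨0, Fin.elim0, Fin.elim0, fun i => i.elim0, by simp, fun i => i.elim0⟩

variable (G force) in
lemma exists_isZFS_card_eq_zfNum [Fintype V] :
    ∃ B : Finset V, IsZFS G force B ∧ #B = zfNum G force :=
  Nat.sInf_mem (s := {m | ∃ B : Finset V, IsZFS G force B ∧ #B = m})
    ⟨_, univ, isZFS_univ, rfl⟩

lemma zfNum_le_card {B : Finset V} (h : IsZFS G force B) : zfNum G force ≤ #B :=
  Nat.sInf_le ⟨B, h, rfl⟩

lemma card_add_eq_card_of_compl_eq_range [Fintype V] {B : Finset V} {k : ℕ} {b : Fin k → V}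
    (hb : Function.Injective b) (hB : ∀ v, v ∉ B ↔ ∃ i, b i = v) :
    #B + k = Fintype.card V := by
  classical
  have hcompl : Bᶜ = univ.image b := by ext v; simp [hB]
  rw [← card_add_card_compl B, hcompl, card_image_of_injective _ hb, card_univ, Fintype.card_fin]

lemma isZFS_of_finset {ι : Type*} [LinearOrder ι] {B : Finset V} (I : Finset ι) (b a : ι → V)
    (hb : Set.InjOn b I) (hB : ∀ v, v ∉ B ↔ ∃ i ∈ I, b i = v)
    (hforce : ∀ i ∈ I, force G {v | ∀ j ∈ I, i ≤ j → v ≠ b j} (a i) (b i)) :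
    IsZFS G force B := by
  set e := I.orderEmbOfFin rfl
  have hmem : ∀ t, e t ∈ I := I.orderEmbOfFin_mem rfl
  have hrange : Set.range e = I := I.range_orderEmbOfFin rfl
  refine ⟨#I, b ∘ e, a ∘ e, fun s t h => e.injective (hb (hmem s) (hmem t) h), fun v => ?_,
    fun t => ?_⟩
  · rw [hB]
    simp only [Function.comp_apply, ← Finset.mem_coe, ← hrange, Set.exists_range_iff]
  · have hS :
        {v | ∀ s, t ≤ s → v ≠ b (e s)} = {v | ∀ j ∈ I, e t ≤ j → v ≠ b j} := by
      ext v
      simp only [Set.mem_ofPred_eq, ← Finset.mem_coe, ← hrange, Set.forall_mem_range,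
        e.le_iff_le]
    simpa [hS] using hforce (e t) (hmem t)

lemma ZminusForce.mono {S T : Set V} {x y : V} (h : ZminusForce G S x y) (hST : S ⊆ T)
    (hy : y ∉ T) : ZminusForce G T x y :=
  ⟨hy, h.2.1, fun u hu huy => hST (h.2.2 u hu huy)⟩

lemma ZminusForce.zForce {S : Set V} {x y : V} (h : ZminusForce G S x y) (hx : x ∈ S) :
    ZForce G S x y := by
  refine ⟨h.1, h.2.1, fun u hu huy => ?_⟩
  rcases hu with rfl | hu
  exacts [hx, h.2.2 u hu huy]

lemma injective_of_zminusForce {k : ℕ} {b a : Fin k → V} (hb : Function.Injective b)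
    (hforce : ∀ i, ZminusForce G {v | ∀ j, i ≤ j → v ≠ b j} (a i) (b i)) :
    Function.Injective a := by
  refine Function.Injective.of_lt_imp_ne fun i i' hlt ha => ?_
  have hadj : G.Adj (a i) (b i') := ha ▸ (hforce i').2.1
  exact (hforce i).2.2 _ hadj (hb.ne hlt.ne') i' hlt.le rfl

end ZeroForcing

/-- `2 Z(G) ≤ n + Z_−(G)` for every finite simple graph `G`
on `n` vertices. -/
theorem statement_7 {V : Type*} [Fintype V] (G : SimpleGraph V) :
    2 * zfNum G ZForce ≤ Fintype.card V + zfNum G ZminusForce := by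
  classical
  obtain ⟨B, ⟨k, b, a, hb, hB, hforce⟩, hcard⟩ := exists_isZFS_card_eq_zfNum G ZminusForce
  obtain ⟨I, hIk, hI⟩ := exists_le_two_mul_card_forall_not_rel (fun i j => a i = b j)
    (fun _ _ _ h h' => hb (h.symm.trans h'))
    (fun _ _ _ h h' => injective_of_zminusForce hb hforce (h.trans h'.symm))
  have hZ : IsZFS G ZForce (univ \ I.image b) := by
    refine isZFS_of_finset I b a hb.injOn (fun v => by simp) fun i hi => ?_
    refine ((hforce i).mono (T := {v | ∀ j ∈ I, i ≤ j → v ≠ b j})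
      (fun v hv j _ hij => hv j hij) fun h => h i hi le_rfl rfl).zForce fun j hj hij => ?_
    rcases hij.lt_or_eq with hlt | rfl
    · exact hI i hi j hj hlt
    · exact (hforce i).2.1.ne
  have hZle := zfNum_le_card hZ
  have hBk := card_add_eq_card_of_compl_eq_range hb hB
  rw [card_sdiff_of_subset (subset_univ _), card_univ, card_image_of_injective _ hb] at hZle
  omega

end ZFGrundy
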